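/- The number of sequences of length n over a finite alphabet 𝒳 having a given type λ (i.e., the size of the type class) satisfies (n+1)^{-|𝒳|} · 2^{n H(λ)} ≤ |Λ_λ| ≤ 2^{n H(λ)}, where H(λ) is the Shannon entropy of λ in base 2. -/

import Mathlib

open Finset Real

noncomputable def shannonH {X : Type} [Fintype X] (p : X → ℝ) : ℝ :=
  -∑ x, p x * Real.logb 2 (p x)

/-- `b!/a! ≤ b^(b-a)` for `a ≤ b`. -/
lemma fact_aux1 {a b : ℕ} (h : a ≤ b) :
    b.factorial ≤ a.factorial * b ^ (b - a) := by
  induction b, h using Nat.le_induction with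
  | base => simp
  | succ b hab ih =>
    have hb : b + 1 - a = (b - a) + 1 := by omega
    rw [hb, Nat.factorial_succ]
    calc (b + 1) * b.factorial ≤ (b + 1) * (a.factorial * b ^ (b - a)) := by gcongr
      _ ≤ (b + 1) * (a.factorial * (b + 1) ^ (b - a)) := by gcongr <;> omega
      _ = a.factorial * (b + 1) ^ ((b - a) + 1) := by rw [pow_succ]; ring

/-- `a! · a^(b-a) ≤ b!` for `a ≤ b`. -/
lemma fact_aux2 {a b : ℕ} (h : a ≤ b) :
    a.factorial * a ^ (b - a) ≤ b.factorial := by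
  induction b, h using Nat.le_induction with
  | base => simp
  | succ b hab ih =>
    have hb : b + 1 - a = (b - a) + 1 := by omega
    rw [hb, pow_succ, ← mul_assoc, Nat.factorial_succ]
    calc a.factorial * a ^ (b - a) * a ≤ b.factorial * a := by gcongr
      _ ≤ b.factorial * (b + 1) := by gcongr; omega
      _ = (b + 1) * b.factorial := by ring

/-- Key inequality: `a! · a^b ≤ b! · a^a`. -/
lemma fact_key (a b : ℕ) : a.factorial * a ^ b ≤ b.factorial * a ^ a := by
  rcases le_total b a with h | h
  · have hba : a - b + b = a := by omega
    calc a.factorial * a ^ b ≤ b.factorial * a ^ (a - b) * a ^ b := by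
          gcongr; exact fact_aux1 h
      _ = b.factorial * a ^ a := by rw [mul_assoc, ← pow_add, hba]
  · have hba : b - a + a = b := by omega
    calc a.factorial * a ^ b = a.factorial * a ^ (b - a) * a ^ a := by
          rw [mul_assoc, ← pow_add, hba]
      _ ≤ b.factorial * a ^ a := by gcongr; exact fact_aux2 h

/-- The size of a type class is the multinomial coefficient. -/
lemma card_type_class {X : Type} [Fintype X] [DecidableEq X] {n : ℕ}
    (k : X → ℕ) (hk : ∑ x, k x = n) :
    Nat.card {xs : Fin n → X //
        ∀ x, (Finset.univ.filter fun i => xs i = x).card = k x}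
      = Nat.multinomial Finset.univ k := by
  classical
  set S := {xs : Fin n → X //
      ∀ x, (Finset.univ.filter fun i => xs i = x).card = k x} with hS
  -- a reference sequence with the given counts
  have hcard : Fintype.card (Fin n) = Fintype.card (Σ x : X, Fin (k x)) := by
    simp [Fintype.card_sigma, hk]
  let e₀ : Fin n ≃ Σ x : X, Fin (k x) := Fintype.equivOfCardEq hcard
  let f₀ : Fin n → X := fun i => (e₀ i).1
  have hfib : ∀ x : X, Fintype.card {i : Fin n // f₀ i = x} = k x := by
    intro x
    have e1 : {i : Fin n // f₀ i = x} ≃ {p : Σ y : X, Fin (k y) // p.1 = x} :=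
      e₀.subtypeEquiv fun i => Iff.rfl
    have e2 : {p : Σ y : X, Fin (k y) // p.1 = x} ≃ Fin (k x) :=
      { toFun := fun p => p.2 ▸ p.1.2
        invFun := fun j => ⟨⟨x, j⟩, rfl⟩
        left_inv := by rintro ⟨⟨y, j⟩, rfl⟩; rfl
        right_inv := fun j => rfl }
    rw [Fintype.card_congr (e1.trans e2), Fintype.card_fin]
  have h₀ : ∀ x, (Finset.univ.filter fun i => f₀ i = x).card = k x := by
    intro x
    rw [← hfib x, Fintype.card_subtype]
  -- the gluing bijection
  let T := Σ xs : S, ∀ x : X, {i : Fin n // f₀ i = x} ≃ {i : Fin n // xs.1 i = x}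
  let F : T → Equiv.Perm (Fin n) := fun z => Equiv.ofFiberEquiv z.2
  have hFmap : ∀ (z : T) (i : Fin n), z.1.1 (F z i) = f₀ i := fun z i =>
    Equiv.ofFiberEquiv_map z.2 i
  have hFinj : Function.Injective F := by
    rintro ⟨⟨xs, hxs⟩, g⟩ ⟨⟨xs', hxs'⟩, g'⟩ hFF
    have hm1 : ∀ i, xs ((F ⟨⟨xs, hxs⟩, g⟩) i) = f₀ i := fun i =>
      hFmap ⟨⟨xs, hxs⟩, g⟩ i
    have hm2 : ∀ i, xs' ((F ⟨⟨xs', hxs'⟩, g'⟩) i) = f₀ i := fun i =>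
      hFmap ⟨⟨xs', hxs'⟩, g'⟩ i
    have hxx : xs = xs' := by
      funext j
      have h1 := hm1 ((F ⟨⟨xs, hxs⟩, g⟩).symm j)
      have h2 := hm2 ((F ⟨⟨xs', hxs'⟩, g'⟩).symm j)
      rw [Equiv.apply_symm_apply] at h1
      rw [← hFF, Equiv.apply_symm_apply] at h2
      exact h1.trans h2.symm
    subst hxx
    have hgg : g = g' := by
      funext x
      ext ⟨i, hi⟩
      subst hi
      have h5 : (F ⟨⟨xs, hxs⟩, g⟩) i = (F ⟨⟨xs, hxs⟩, g'⟩) i := by rw [hFF]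
      exact congrArg Fin.val
        (by simpa [F, Equiv.ofFiberEquiv, Equiv.sigmaFiberEquiv] using h5)
    rw [hgg]
  have hFsurj : Function.Surjective F := by
    intro σ
    refine ⟨⟨⟨fun j => f₀ (σ.symm j), ?_⟩, fun x => σ.subtypeEquiv fun i => by simp⟩, ?_⟩
    · intro x
      rw [← h₀ x]
      apply Finset.card_bij' (fun j _ => σ.symm j) (fun i _ => σ i) <;>
        simp
    · ext i
      simp [F, Equiv.ofFiberEquiv, Equiv.sigmaFiberEquiv]
  have hbij : Function.Bijective F := ⟨hFinj, hFsurj⟩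
  have hTcard : Fintype.card T = Nat.factorial n := by
    rw [Fintype.card_of_bijective hbij, Fintype.card_perm, Fintype.card_fin]
  have hTcard2 : Fintype.card T = Fintype.card S * ∏ x : X, Nat.factorial (k x) := by
    rw [Fintype.card_sigma]
    have : ∀ xs : S, Fintype.card
        (∀ x : X, {i : Fin n // f₀ i = x} ≃ {i : Fin n // xs.1 i = x})
        = ∏ x : X, Nat.factorial (k x) := by
      intro xs
      rw [Fintype.card_pi]
      refine Finset.prod_congr rfl fun x _ => ?_
      have hfib' : Fintype.card {i : Fin n // xs.1 i = x} = k x := by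
        rw [Fintype.card_subtype, xs.2 x]
      rw [Fintype.card_equiv (Fintype.equivOfCardEq (by rw [hfib', hfib x])),
        hfib x]
    simp [this, Finset.sum_const, Finset.card_univ, mul_comm]
  have hspec := Nat.multinomial_spec Finset.univ k
  rw [hk] at hspec
  have hpos : 0 < ∏ x : X, Nat.factorial (k x) :=
    Finset.prod_pos fun x _ => Nat.factorial_pos _
  have : Fintype.card S * ∏ x : X, Nat.factorial (k x)
      = Nat.multinomial Finset.univ k * ∏ x : X, Nat.factorial (k x) := by
    rw [← hTcard2, hTcard, ← hspec, mul_comm]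
  rw [Nat.card_eq_fintype_card]
  exact Nat.eq_of_mul_eq_mul_right hpos this

theorem type_class_size_bounds
    {X : Type} [Fintype X] [DecidableEq X] {n : ℕ} (hn : 0 < n)
    (k : X → ℕ) (hk : ∑ x, k x = n) :
    letI lam : X → ℝ := fun x => (k x : ℝ) / n
    letI N : ℕ := Nat.card {xs : Fin n → X //
      ∀ x, (Finset.univ.filter fun i => xs i = x).card = k x}
    ((n : ℝ) + 1) ^ (-(Fintype.card X : ℝ)) * (2 : ℝ) ^ ((n : ℝ) * shannonH lam)
        ≤ (N : ℝ) ∧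
    (N : ℝ) ≤ (2 : ℝ) ^ ((n : ℝ) * shannonH lam) := by
  classical
  set lam : X → ℝ := fun x => (k x : ℝ) / n with hlamdef
  set N : ℕ := Nat.card {xs : Fin n → X //
      ∀ x, (Finset.univ.filter fun i => xs i = x).card = k x} with hNdef
  have hN : N = Nat.multinomial Finset.univ k := card_type_class k hk
  have hn' : (0:ℝ) < n := by exact_mod_cast hn
  set P : ℝ := ∏ x, lam x ^ k x with hPdef
  have hfacpos : ∀ x : X, (0:ℝ) < lam x ^ k x := by
    intro x
    rcases Nat.eq_zero_or_pos (k x) with h | h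
    · simp [h]
    · have : (0:ℝ) < lam x := by
        apply div_pos _ hn'
        exact_mod_cast h
      positivity
  have hP : 0 < P := Finset.prod_pos fun x _ => hfacpos x
  -- 2 ^ (n H) = P⁻¹
  have hA : (2 : ℝ) ^ ((n : ℝ) * shannonH lam) = P⁻¹ := by
    have hlog : Real.logb 2 P = ∑ x, (k x : ℝ) * Real.logb 2 (lam x) := by
      rw [hPdef, Real.logb_prod _ _ fun x _ => (hfacpos x).ne']
      exact Finset.sum_congr rfl fun x _ => Real.logb_pow 2 (lam x) (k x)
    have hH : (n : ℝ) * shannonH lam = - Real.logb 2 P := by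
      rw [hlog, shannonH, mul_neg, Finset.mul_sum, neg_inj]
      refine Finset.sum_congr rfl fun x _ => ?_
      have : (n : ℝ) * lam x = k x := by
        show (n : ℝ) * ((k x : ℝ) / n) = k x
        field_simp [hn'.ne']
      rw [← mul_assoc, this]
    rw [hH, Real.rpow_neg (by norm_num), Real.rpow_logb (by norm_num) (by norm_num) hP]
  -- the multinomial theorem: the terms sum to 1
  have hsum1 : ∑ x, lam x = 1 := by
    simp only [lam, ← Finset.sum_div]
    rw [show ∑ x, (k x : ℝ) = n by exact_mod_cast congrArg Nat.cast hk]
    exact div_self hn'.ne'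
  have hMT : (1 : ℝ) = ∑ m ∈ Finset.piAntidiag (Finset.univ : Finset X) n,
      (Nat.multinomial Finset.univ m : ℝ) * ∏ x, lam x ^ m x := by
    have := Finset.sum_pow_eq_sum_piAntidiag (Finset.univ : Finset X) lam n
    rw [hsum1, one_pow] at this
    exact this
  -- each term rewrites as (n!/n^n) * Q m
  set Q : (X → ℕ) → ℝ := fun m => ∏ x, (k x : ℝ) ^ m x / (Nat.factorial (m x) : ℝ)
    with hQdef
  have hterm : ∀ m : X → ℕ, (∑ x, m x) = n →
      (Nat.multinomial Finset.univ m : ℝ) * ∏ x, lam x ^ m x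
        = ((Nat.factorial n : ℝ) / (n : ℝ) ^ n) * Q m := by
    intro m hm
    have hspec := Nat.multinomial_spec Finset.univ m
    rw [hm] at hspec
    have hspecR : (∏ x, (Nat.factorial (m x) : ℝ)) * (Nat.multinomial Finset.univ m : ℝ)
        = (Nat.factorial n : ℝ) := by exact_mod_cast hspec
    have hprod : ∏ x, lam x ^ m x = (∏ x, (k x : ℝ) ^ m x) / (n : ℝ) ^ n := by
      simp only [lam, div_pow]
      rw [Finset.prod_div_distrib, Finset.prod_pow_eq_pow_sum, hm]
    have hfpos : (0:ℝ) < ∏ x, (Nat.factorial (m x) : ℝ) :=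
      Finset.prod_pos fun x _ => by exact_mod_cast Nat.factorial_pos (m x)
    have hQm : Q m = (∏ x, (k x : ℝ) ^ m x) / ∏ x, ((m x).factorial : ℝ) := by
      simp only [hQdef]
      rw [Finset.prod_div_distrib]
    rw [hprod, hQm]
    field_simp
    rw [← hspecR]
    ring
  -- the term for k is the largest
  have hQle : ∀ m : X → ℕ, Q m ≤ Q k := by
    intro m
    refine Finset.prod_le_prod (fun x _ => by positivity) fun x _ => ?_
    have h1 : (0:ℝ) < (Nat.factorial (m x) : ℝ) := by
      exact_mod_cast Nat.factorial_pos (m x)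
    have h2 : (0:ℝ) < (Nat.factorial (k x) : ℝ) := by
      exact_mod_cast Nat.factorial_pos (k x)
    rw [div_le_div_iff₀ h1 h2]
    have := fact_key (k x) (m x)
    calc (k x : ℝ) ^ m x * (Nat.factorial (k x) : ℝ)
        = ((Nat.factorial (k x) * k x ^ m x : ℕ) : ℝ) := by push_cast; ring
      _ ≤ ((Nat.factorial (m x) * k x ^ k x : ℕ) : ℝ) := by exact_mod_cast this
      _ = (k x : ℝ) ^ k x * (Nat.factorial (m x) : ℝ) := by push_cast; ring
  set M : ℝ := (Nat.multinomial Finset.univ k : ℝ) with hMdef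
  have hkmem : k ∈ Finset.piAntidiag (Finset.univ : Finset X) n := by
    rw [Finset.mem_piAntidiag]
    exact ⟨hk, fun i _ => Finset.mem_univ i⟩
  have hMP : M * P = ((Nat.factorial n : ℝ) / (n : ℝ) ^ n) * Q k := hterm k hk
  have htermle : ∀ m ∈ Finset.piAntidiag (Finset.univ : Finset X) n,
      (Nat.multinomial Finset.univ m : ℝ) * ∏ x, lam x ^ m x ≤ M * P := by
    intro m hm
    rw [Finset.mem_piAntidiag] at hm
    rw [hterm m hm.1, hMP]
    have : (0:ℝ) ≤ (Nat.factorial n : ℝ) / (n : ℝ) ^ n := by positivity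
    exact mul_le_mul_of_nonneg_left (hQle m) this
  -- upper bound
  have hupper : M * P ≤ 1 := by
    rw [hMT]
    refine Finset.single_le_sum (f := fun m =>
        (Nat.multinomial Finset.univ m : ℝ) * ∏ x, lam x ^ m x) ?_ hkmem
    intro m _
    have : (0:ℝ) ≤ ∏ x, lam x ^ m x :=
      Finset.prod_nonneg fun x _ => by positivity
    positivity
  -- number of types bound
  have hcardtypes : (Finset.piAntidiag (Finset.univ : Finset X) n).card
      ≤ (n + 1) ^ Fintype.card X := by
    have hbound : ∀ (m : X → ℕ), (∑ x, m x) = n → ∀ x, m x < n + 1 := by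
      intro m hm x
      have h9 : m x ≤ ∑ i, m i :=
        Finset.single_le_sum (fun i _ => Nat.zero_le _) (Finset.mem_univ x)
      rw [hm] at h9
      exact Nat.lt_succ_of_le h9
    have hle : (Finset.piAntidiag (Finset.univ : Finset X) n).card
        ≤ (Finset.univ : Finset (X → Fin (n + 1))).card := by
      apply Finset.card_le_card_of_injOn (fun m x => Fin.ofNat (n + 1) (m x))
        (fun m _ => Finset.mem_univ _)
      intro m hm m' hm' hmm
      rw [Finset.mem_coe, Finset.mem_piAntidiag] at hm hm'
      funext x
      have hb : m x < n + 1 := hbound m hm.1 x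
      have hb' : m' x < n + 1 := hbound m' hm'.1 x
      have h10 : Fin.ofNat (n + 1) (m x) = Fin.ofNat (n + 1) (m' x) :=
        congrFun hmm x
      have h11 := congrArg Fin.val h10
      rwa [Fin.val_ofNat, Fin.val_ofNat, Nat.mod_eq_of_lt hb, Nat.mod_eq_of_lt hb'] at h11
    rwa [Finset.card_univ, Fintype.card_fun, Fintype.card_fin] at hle
  -- lower bound
  have hlower : (1 : ℝ) ≤ ((n : ℝ) + 1) ^ Fintype.card X * (M * P) := by
    calc (1 : ℝ) = ∑ m ∈ Finset.piAntidiag (Finset.univ : Finset X) n,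
          (Nat.multinomial Finset.univ m : ℝ) * ∏ x, lam x ^ m x := hMT
      _ ≤ (Finset.piAntidiag (Finset.univ : Finset X) n).card • (M * P) :=
          Finset.sum_le_card_nsmul _ _ _ htermle
      _ = ((Finset.piAntidiag (Finset.univ : Finset X) n).card : ℝ) * (M * P) := by
          rw [nsmul_eq_mul]
      _ ≤ ((n : ℝ) + 1) ^ Fintype.card X * (M * P) := by
          have hMPnn : (0:ℝ) ≤ M * P := by
            have : (0:ℝ) ≤ M := by rw [hMdef]; positivity
            exact mul_nonneg this hP.le
          refine mul_le_mul_of_nonneg_right ?_ hMPnn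
          calc ((Finset.piAntidiag (Finset.univ : Finset X) n).card : ℝ)
              ≤ (((n + 1) ^ Fintype.card X : ℕ) : ℝ) := by exact_mod_cast hcardtypes
            _ = ((n : ℝ) + 1) ^ Fintype.card X := by push_cast; ring
  have hNM : (N : ℝ) = M := by rw [hN, hMdef]
  constructor
  · rw [hNM, hA]
    have hC : (0:ℝ) < ((n : ℝ) + 1) ^ Fintype.card X := by positivity
    have hrw : ((n : ℝ) + 1) ^ (-(Fintype.card X : ℝ))
        = (((n : ℝ) + 1) ^ Fintype.card X)⁻¹ := by
      rw [Real.rpow_neg (by positivity), Real.rpow_natCast]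
    rw [hrw]
    rw [← mul_inv]
    rw [inv_le_iff_one_le_mul₀ (by positivity)]
    calc (1 : ℝ) ≤ ((n : ℝ) + 1) ^ Fintype.card X * (M * P) := hlower
      _ = M * (((n : ℝ) + 1) ^ Fintype.card X * P) := by ring
  · rw [hNM, hA]
    rw [← one_div, le_div_iff₀ hP]
    exact hupper
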